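/- Let 0 ≤ l < k ≤ n. There exists a constant c > 0 depending only on n, k, l such that for every λ ∈ Γ_k, Σ_{j=1}^{n} G^{jj}(λ) ≥ (n−k+1)(1 − l/k) · σ_{k−1}(λ)/σ_l(λ) ≥ c · (σ_k(λ)/σ_l(λ))^{1 − 1/(k−l)}. -/

import Mathlib

/-- The `m`-th elementary symmetric polynomial of `lam : Fin n → ℝ`. -/
noncomputable def esymm (n m : ℕ) (lam : Fin n → ℝ) : ℝ :=
  ∑ s ∈ Finset.univ.powersetCard m, ∏ i ∈ s, lam i

/-- `σ_{l-1}` with the convention `σ_{-1} = 0`. -/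
noncomputable def esymmPred (n l : ℕ) (lam : Fin n → ℝ) : ℝ :=
  if l = 0 then 0 else esymm n (l - 1) lam

/-- The Gårding cone `Γ_k`. -/
def GammaK (n k : ℕ) : Set (Fin n → ℝ) :=
  {lam | ∀ j, 1 ≤ j → j ≤ k → 0 < esymm n j lam}

/-- `G^{jj} = ∂(σ_k/σ_l)/∂λ_j`. -/
noncomputable def Gjj (n k l : ℕ) (lam : Fin n → ℝ) (j : Fin n) : ℝ :=
  (esymm n (k - 1) (Function.update lam j 0) * esymm n l lam
      - esymm n k lam * esymmPred n l (Function.update lam j 0)) / (esymm n l lam) ^ 2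

/-- `F^{ii} = θ Σ_j G^{jj} − μ G^{ii}`. -/
noncomputable def Fii (n k l : ℕ) (θ μ : ℝ) (lam : Fin n → ℝ) (i : Fin n) : ℝ :=
  θ * ∑ j, Gjj n k l lam j - μ * Gjj n k l lam i

/-- Gradient vector of `u` at `x`. -/
noncomputable def pgrad (n : ℕ) (u : (Fin n → ℝ) → ℝ) (x : Fin n → ℝ) : Fin n → ℝ :=
  fun i => fderiv ℝ u x (Pi.single i 1)

/-- Hessian matrix of `u` at `x`. -/
noncomputable def hessMat (n : ℕ) (u : (Fin n → ℝ) → ℝ) (x : Fin n → ℝ) :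
    Matrix (Fin n) (Fin n) ℝ :=
  Matrix.of fun i j => iteratedFDeriv ℝ 2 u x ![Pi.single i 1, Pi.single j 1]

/-- Hessian matrix of `u` at `x` computed with derivatives within `s`. -/
noncomputable def hessMatWithin (n : ℕ) (u : (Fin n → ℝ) → ℝ) (s : Set (Fin n → ℝ))
    (x : Fin n → ℝ) : Matrix (Fin n) (Fin n) ℝ :=
  Matrix.of fun i j => iteratedFDerivWithin ℝ 2 u s x ![Pi.single i 1, Pi.single j 1]

/-- `η[u] = (Δu) I − D²u`. -/
noncomputable def etaMat (n : ℕ) (u : (Fin n → ℝ) → ℝ) (x : Fin n → ℝ) :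
    Matrix (Fin n) (Fin n) ℝ :=
  Matrix.trace (hessMat n u x) • (1 : Matrix (Fin n) (Fin n) ℝ) - hessMat n u x

/-- Euclidean ball in `Fin n → ℝ`. -/
def EBall (n : ℕ) (c : Fin n → ℝ) (r : ℝ) : Set (Fin n → ℝ) :=
  {x | ∑ i, (x i - c i) ^ 2 < r ^ 2}

/-- `W = √(1+|Du|²)`. -/
noncomputable def Wgraph (n : ℕ) (u : (Fin n → ℝ) → ℝ) (x : Fin n → ℝ) : ℝ :=
  Real.sqrt (1 + ∑ i, (pgrad n u x i) ^ 2)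

/-- Matrix similar to `A = W⁻¹ g^{-1/2} D²u g^{-1/2}`, namely `W⁻¹ g⁻¹ D²u`. -/
noncomputable def shapeMat (n : ℕ) (u : (Fin n → ℝ) → ℝ) (x : Fin n → ℝ) :
    Matrix (Fin n) (Fin n) ℝ :=
  (Wgraph n u x)⁻¹ •
    ((1 + Matrix.vecMulVec (pgrad n u x) (pgrad n u x))⁻¹ * hessMat n u x)


/-!
Summing `G^{jj}` over `j` with `∑ⱼ σ_m(λ|j) = (n - m) σ_m` reduces both inequalities to
statements about the normalized means `E_m = σ_m / C(n, m)`. Newton's inequalities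
`E_{m-1} E_{m+1} ≤ E_m²` hold for every real vector: the `r`-th derivative of `∏ (X - λᵢ)`
is again real-rooted by Rolle's theorem, and for a real-rooted polynomial the inequality
between its three lowest coefficients follows by induction on the number of roots.
On `Γ_k`, where `E_0, …, E_k > 0`, they make `E_{m+1} / E_m` nonincreasing for `m < k`.
This gives `E_k E_{l-1} ≤ E_{k-1} E_l`, which is the first inequality, and
`E_l (E_k / E_{k-1})^(k-l) ≤ E_k`, which after taking `(k - l)`-th roots is the second.
-/

open Finset Polynomial
open scoped Nat

namespace Multiset

variable {R : Type*} [CommSemiring R]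

lemma esymm_cons_succ (a : R) (s : Multiset R) (m : ℕ) :
    (a ::ₘ s).esymm (m + 1) = s.esymm (m + 1) + a * s.esymm m := by
  simp [esymm, powersetCard_cons, sum_map_mul_left]

lemma esymm_zero (s : Multiset R) : s.esymm 0 = 1 := by
  simp [esymm]

lemma esymm_eq_zero_of_card_lt {s : Multiset R} {m : ℕ} (h : card s < m) : s.esymm m = 0 := by
  simp [esymm, powersetCard_eq_empty m h]

lemma esymm_card_mul_esymm_le (s : Multiset ℝ) {D : ℕ} (hs : card s = D + 2) :
    2 * (D + 2) * (s.esymm (D + 2) * s.esymm D) ≤ (D + 1) * s.esymm (D + 1) ^ 2 := by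
  induction D generalizing s with
  | zero =>
    obtain ⟨x, y, rfl⟩ := card_eq_two.1 hs
    rw [esymm_zero, insert_eq_cons, esymm_pair_one, esymm_pair_two]
    push_cast
    linear_combination sq_nonneg (x - y)
  | succ D ih =>
    obtain ⟨a, t, rfl, ht⟩ := card_eq_succ_iff.1 hs
    have htop : t.esymm (D + 3) = 0 := esymm_eq_zero_of_card_lt (by omega)
    rw [esymm_cons_succ, esymm_cons_succ, esymm_cons_succ, htop]
    push_cast
    refine le_of_mul_le_mul_left ?_ (by positivity : (0 : ℝ) < D + 2)
    linear_combination (D + 3) * a ^ 2 * ih t ht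
      + sq_nonneg ((D + 2) * t.esymm (D + 2) - a * t.esymm (D + 1))

end Multiset

namespace Polynomial

lemma Splits.iterate_derivative {p : ℝ[X]} (hp : p.Splits) (r : ℕ) :
    (derivative^[r] p).Splits := by
  induction r with
  | zero => exact hp
  | succ r ih =>
    rw [splits_iff_card_roots] at ih
    rw [Function.iterate_succ_apply', splits_iff_card_roots, natDegree_derivative]
    have := card_roots_le_derivative (derivative^[r] p)
    have := card_roots' (derivative (derivative^[r] p))
    rw [natDegree_derivative] at this
    omega

lemma natDegree_iterate_derivative_eq (p : ℝ[X]) (r : ℕ) :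
    (derivative^[r] p).natDegree = p.natDegree - r := by
  induction r with
  | zero => rfl
  | succ r ih => rw [Function.iterate_succ_apply', natDegree_derivative, ih, Nat.sub_sub]

lemma Splits.coeff_zero_mul_coeff_two_le {q : ℝ[X]} (hq : q.Splits) {D : ℕ}
    (hdeg : q.natDegree = D + 2) :
    2 * (D + 2) * (q.coeff 0 * q.coeff 2) ≤ (D + 1) * q.coeff 1 ^ 2 := by
  have hcard : Multiset.card q.roots = D + 2 := by rw [splits_iff_card_roots.1 hq, hdeg]
  have hvieta (i : ℕ) (hi : i ≤ 2) := coeff_eq_esymm_roots_of_splits hq (k := i) (by omega)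
  rw [hdeg] at hvieta
  rw [hvieta 0 (by norm_num), hvieta 1 (by norm_num), hvieta 2 (by norm_num)]
  simp only [show D + 2 - 0 = D + 2 by omega, show D + 2 - 1 = D + 1 by omega,
    show D + 2 - 2 = D by omega, pow_succ]
  set e := q.roots.esymm
  have hsign : ((-1 : ℝ) ^ D) ^ 2 = 1 := by rw [← pow_mul, pow_mul']; norm_num
  have := mul_le_mul_of_nonneg_left (q.roots.esymm_card_mul_esymm_le hcard)
    (sq_nonneg q.leadingCoeff)
  linear_combination this +
    q.leadingCoeff ^ 2 * (2 * (D + 2) * (e (D + 2) * e D) - (D + 1) * e (D + 1) ^ 2) * hsign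

end Polynomial

theorem Multiset.esymm_mul_esymm_le (s : Multiset ℝ) {t r : ℕ} (hs : card s = t + 2 + r) :
    (t + 2) * (r + 2) * (s.esymm t * s.esymm (t + 2))
      ≤ (t + 1) * (r + 1) * s.esymm (t + 1) ^ 2 := by
  set P : ℝ[X] := (s.map fun a => X - C a).prod
  have hP : P.Splits := by
    rw [splits_iff_card_roots, roots_multiset_prod_X_sub_C,
      natDegree_multiset_prod_X_sub_C_eq_card]
  set q := derivative^[r] P
  have hq : q.natDegree = t + 2 := by
    rw [natDegree_iterate_derivative_eq, natDegree_multiset_prod_X_sub_C_eq_card, hs]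
    omega
  have hcoeff (m : ℕ) (hm : m ≤ t + 2) :
      m ! * q.coeff m = (m + r)! * ((-1) ^ (t + 2 - m) * s.esymm (t + 2 - m)) := by
    rw [coeff_iterate_derivative, nsmul_eq_mul, prod_X_sub_C_coeff s (by omega), hs,
      show t + 2 + r - (m + r) = t + 2 - m by omega, ← mul_assoc, ← Nat.cast_mul,
      Nat.add_descFactorial_eq_ascFactorial, Nat.factorial_mul_ascFactorial]
  have h0 := hcoeff 0 (by omega)
  have h1 := hcoeff 1 (by omega)
  have h2 := hcoeff 2 (by omega)
  simp only [show t + 2 - 0 = t + 2 by omega, show t + 2 - 1 = t + 1 by omega,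
    show t + 2 - 2 = t by omega, show 1 + r = r + 1 by omega, show 2 + r = r + 1 + 1 by omega,
    pow_succ, Nat.factorial_succ, zero_add, Nat.factorial_zero] at h0 h1 h2
  push_cast at h0 h1 h2
  rw [one_mul] at h0 h1
  have key : 2 * (t + 2) * (q.coeff 0 * q.coeff 2) ≤ (t + 1) * q.coeff 1 ^ 2 :=
    (hP.iterate_derivative r).coeff_zero_mul_coeff_two_le hq
  rw [h0, h1, eq_div_of_mul_eq two_ne_zero ((mul_comm _ _).trans h2)] at key
  have hsign : ((-1 : ℝ) ^ t) ^ 2 = 1 := by rw [← pow_mul, pow_mul']; norm_num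
  refine le_of_mul_le_mul_left ?_ (by positivity : (0 : ℝ) < (r + 1) * r ! ^ 2)
  set e := s.esymm
  linear_combination key - (r + 1) * r ! ^ 2 * ((t + 2) * (r + 2) * (e t * e (t + 2))
    - (t + 1) * (r + 1) * e (t + 1) ^ 2) * hsign

lemma esymm_eq_multiset_esymm (n m : ℕ) (lam : Fin n → ℝ) :
    esymm n m lam = (univ.val.map lam).esymm m :=
  (Finset.esymm_map_val lam univ m).symm

lemma cast_choose_succ_mul {n m : ℕ} (h : m ≤ n) :
    (n.choose (m + 1) : ℝ) * (m + 1) = n.choose m * (n - m) := by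
  rw [← Nat.cast_sub h]
  exact_mod_cast Nat.choose_succ_right_eq n m

lemma cast_choose_pos {n j : ℕ} (h : j ≤ n) : (0 : ℝ) < n.choose j := by
  exact_mod_cast Nat.choose_pos h

noncomputable def esymmMean (n m : ℕ) (lam : Fin n → ℝ) : ℝ :=
  esymm n m lam / n.choose m

lemma esymmMean_mul_esymmMean_le {n m : ℕ} (h : m + 2 ≤ n) (lam : Fin n → ℝ) :
    esymmMean n m lam * esymmMean n (m + 2) lam ≤ esymmMean n (m + 1) lam ^ 2 := by
  obtain ⟨r, rfl⟩ : ∃ r, n = m + 2 + r := ⟨n - (m + 2), by omega⟩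
  have hnewton := (univ.val.map lam).esymm_mul_esymm_le (t := m) (r := r) (by simp)
  simp only [← esymm_eq_multiset_esymm] at hnewton
  have c1 := cast_choose_succ_mul (n := m + 2 + r) (m := m) (by omega)
  have c2 := cast_choose_succ_mul (n := m + 2 + r) (m := m + 1) (by omega)
  push_cast at c1 c2
  rw [show m + 1 + 1 = m + 2 by omega] at c2
  have hchoose : ((m : ℝ) + 2) * (r + 2) * ((m + 2 + r).choose m * (m + 2 + r).choose (m + 2))
      = (m + 1) * (r + 1) * ((m + 2 + r).choose (m + 1) : ℝ) ^ 2 := by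
    linear_combination ((r : ℝ) + 2) * (m + 2 + r).choose m * c2
      - ((r : ℝ) + 1) * (m + 2 + r).choose (m + 1) * c1
  have hC0 := cast_choose_pos (n := m + 2 + r) (j := m) (by omega)
  have hC1 := cast_choose_pos (n := m + 2 + r) (j := m + 1) (by omega)
  have hC2 := cast_choose_pos (n := m + 2 + r) (j := m + 2) (by omega)
  unfold esymmMean
  rw [div_mul_div_comm, div_pow, div_le_div_iff₀ (by positivity) (by positivity)]
  refine le_of_mul_le_mul_left ?_ (by positivity : (0 : ℝ) < (m + 2) * (r + 2))
  linear_combination ((m + 2 + r).choose (m + 1) : ℝ) ^ 2 * hnewton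
    - esymm (m + 2 + r) (m + 1) lam ^ 2 * hchoose

section LogConcave

variable {u : ℕ → ℝ} {k : ℕ}

lemma div_le_div_of_logConcave (hpos : ∀ j ≤ k, 0 < u j)
    (hlc : ∀ j, j + 2 ≤ k → u j * u (j + 2) ≤ u (j + 1) ^ 2) {a b : ℕ} (hab : a ≤ b)
    (hb : b < k) : u (b + 1) / u b ≤ u (a + 1) / u a := by
  induction b, hab using Nat.le_induction with
  | base => rfl
  | succ b hab ih =>
    refine le_trans ?_ (ih (by omega))
    rw [div_le_div_iff₀ (hpos _ (by omega)) (hpos _ (by omega))]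
    linear_combination hlc b (by omega)

lemma mul_div_pow_le_of_logConcave (hpos : ∀ j ≤ k, 0 < u j)
    (hlc : ∀ j, j + 2 ≤ k → u j * u (j + 2) ≤ u (j + 1) ^ 2) (hk : 0 < k) {l m : ℕ}
    (hlm : l + m ≤ k) : u l * (u k / u (k - 1)) ^ m ≤ u (l + m) := by
  induction m with
  | zero => simp
  | succ m ih =>
    have hratio : u k / u (k - 1) ≤ u (l + m + 1) / u (l + m) := by
      have := div_le_div_of_logConcave hpos hlc (a := l + m) (b := k - 1) (by omega) (by omega)
      rwa [Nat.sub_add_cancel hk] at this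
    have hk1 := hpos (k - 1) (by omega)
    have hlm0 := hpos (l + m) (by omega)
    calc u l * (u k / u (k - 1)) ^ (m + 1)
        = u l * (u k / u (k - 1)) ^ m * (u k / u (k - 1)) := by ring
      _ ≤ u (l + m) * (u (l + m + 1) / u (l + m)) :=
        mul_le_mul (ih (by omega)) hratio (div_pos (hpos k le_rfl) hk1).le hlm0.le
      _ = u (l + (m + 1)) := by rw [mul_div_cancel₀ _ hlm0.ne', add_assoc]

end LogConcave

lemma rpow_one_sub_inv_le {x y A : ℝ} (hx : 0 ≤ x) (hy : 0 ≤ y) (hA : 0 ≤ A) {N : ℕ}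
    (hN : 0 < N) (h : x ^ (N - 1) ≤ A * y ^ N) :
    x ^ (1 - 1 / (N : ℝ)) ≤ A ^ (1 / (N : ℝ)) * y := by
  have hN' : (N : ℝ) ≠ 0 := by positivity
  calc x ^ (1 - 1 / (N : ℝ)) = (x ^ (N - 1)) ^ (1 / (N : ℝ)) := by
        rw [← Real.rpow_natCast, ← Real.rpow_mul hx, Nat.cast_pred hN]
        congr 1
        field_simp
    _ ≤ (A * y ^ N) ^ (1 / (N : ℝ)) := Real.rpow_le_rpow (by positivity) h (by positivity)
    _ = A ^ (1 / (N : ℝ)) * y := by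
        rw [Real.mul_rpow hA (by positivity), ← Real.rpow_natCast, ← Real.rpow_mul hy,
          mul_one_div_cancel hN', Real.rpow_one]

lemma esymm_zero (n : ℕ) (lam : Fin n → ℝ) : esymm n 0 lam = 1 := by
  simp [esymm]

lemma sum_esymm_update_zero (n m : ℕ) (lam : Fin n → ℝ) :
    ∑ j, esymm n m (Function.update lam j 0) = ((n - m : ℕ) : ℝ) * esymm n m lam := by
  have hprod (j : Fin n) (S : Finset (Fin n)) :
      ∏ i ∈ S, Function.update lam j 0 i = if j ∈ Sᶜ then ∏ i ∈ S, lam i else 0 := by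
    by_cases hj : j ∈ S
    · simp [hj, prod_update_of_mem hj]
    · simp [hj, prod_update_of_notMem hj]
  simp only [esymm, hprod]
  rw [sum_comm, mul_sum]
  refine sum_congr rfl fun S hS => ?_
  rw [sum_ite_mem, univ_inter, sum_const, card_compl, Fintype.card_fin,
    mem_powersetCard_univ.1 hS, nsmul_eq_mul]

lemma sum_esymmPred_update_zero {n l : ℕ} (hl : l ≤ n) (lam : Fin n → ℝ) :
    ∑ j, esymmPred n l (Function.update lam j 0) = ((n : ℝ) - l + 1) * esymmPred n l lam := by
  unfold esymmPred
  split_ifs with hl0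
  · simp
  · rw [sum_esymm_update_zero, show n - (l - 1) = n - l + 1 by omega]
    push_cast [Nat.cast_sub hl]
    ring

lemma sum_Gjj (n k l : ℕ) (hk : 1 ≤ k) (hkn : k ≤ n) (hl : l ≤ n) (lam : Fin n → ℝ) :
    ∑ j, Gjj n k l lam j
      = (((n : ℝ) - k + 1) * esymm n (k - 1) lam * esymm n l lam
          - ((n : ℝ) - l + 1) * esymm n k lam * esymmPred n l lam) / esymm n l lam ^ 2 := by
  simp only [Gjj, ← sum_div, sum_sub_distrib, ← sum_mul, ← mul_sum, sum_esymm_update_zero,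
    sum_esymmPred_update_zero hl, show n - (k - 1) = n - k + 1 by omega]
  push_cast [Nat.cast_sub hkn]
  ring

lemma esymm_pos_of_mem_GammaK {n k j : ℕ} {lam : Fin n → ℝ} (hlam : lam ∈ GammaK n k)
    (hj : j ≤ k) : 0 < esymm n j lam := by
  rcases j with _ | j
  · simp [esymm_zero]
  · exact hlam _ (by omega) hj

section GardingCone

variable {n k l : ℕ} {lam : Fin n → ℝ}

lemma esymmMean_pos_of_mem_GammaK (hkn : k ≤ n) (hlam : lam ∈ GammaK n k) (j : ℕ)
    (hj : j ≤ k) : 0 < esymmMean n j lam :=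
  div_pos (esymm_pos_of_mem_GammaK hlam hj) (cast_choose_pos (by omega))

lemma esymmMean_logConcave (hkn : k ≤ n) (j : ℕ) (hj : j + 2 ≤ k) :
    esymmMean n j lam * esymmMean n (j + 2) lam ≤ esymmMean n (j + 1) lam ^ 2 :=
  esymmMean_mul_esymmMean_le (by omega) lam

lemma mul_esymm_mul_esymmPred_le (hlk : l < k) (hkn : k ≤ n) (hlam : lam ∈ GammaK n k) :
    k * ((n : ℝ) - l + 1) * (esymm n k lam * esymmPred n l lam)
      ≤ l * ((n : ℝ) - k + 1) * (esymm n (k - 1) lam * esymm n l lam) := by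
  rcases l with _ | l
  · simp [esymmPred]
  have hpos := esymmMean_pos_of_mem_GammaK hkn hlam
  have hratio := div_le_div_of_logConcave hpos (esymmMean_logConcave hkn)
    (a := l) (b := k - 1) (by omega) (by omega)
  rw [Nat.sub_add_cancel (by omega), div_le_div_iff₀ (hpos _ (by omega)) (hpos _ (by omega))]
    at hratio
  have hCk1 := cast_choose_pos (n := n) (j := k - 1) (by omega)
  have hCl1 := cast_choose_pos (n := n) (j := l + 1) (by omega)
  have hCl := cast_choose_pos (n := n) (j := l) (by omega)
  have hCk := cast_choose_pos hkn
  simp only [esymmMean, div_mul_div_comm] at hratio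
  rw [div_le_div_iff₀ (by positivity) (by positivity)] at hratio
  have ck := cast_choose_succ_mul (n := n) (m := k - 1) (by omega)
  have cl := cast_choose_succ_mul (n := n) (m := l) (by omega)
  rw [Nat.sub_add_cancel (by omega), Nat.cast_sub (by omega)] at ck
  simp only [esymmPred, add_tsub_cancel_right, Nat.add_one_ne_zero, if_false]
  push_cast at ck cl ⊢
  refine le_of_mul_le_mul_right ?_ (mul_pos hCk1 hCl1)
  have hln : (l : ℝ) ≤ n := by exact_mod_cast (by omega : l ≤ n)
  have hratio' := mul_le_mul_of_nonneg_left hratio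
    (mul_nonneg (Nat.cast_nonneg k) (sub_nonneg.2 hln))
  linear_combination hratio'
    + esymm n (k - 1) lam * esymm n (l + 1) lam * (n.choose l * (n - l) * ck
      - n.choose (k - 1) * (n - k + 1) * cl)

lemma sum_Gjj_ge (hlk : l < k) (hkn : k ≤ n) (hlam : lam ∈ GammaK n k) :
    ((n : ℝ) - k + 1) * (1 - (l : ℝ) / k) * (esymm n (k - 1) lam / esymm n l lam)
      ≤ ∑ j, Gjj n k l lam j := by
  have hl := esymm_pos_of_mem_GammaK hlam (j := l) hlk.le
  have hk : (0 : ℝ) < k := by exact_mod_cast (by omega : 0 < k)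
  rw [sum_Gjj n k l (by omega) hkn (by omega), le_div_iff₀ (by positivity)]
  have := mul_esymm_mul_esymmPred_le hlk hkn hlam
  field_simp
  linarith

lemma esymmMean_pow_mul_le (hlk : l < k) (hkn : k ≤ n) (hlam : lam ∈ GammaK n k) :
    esymmMean n k lam ^ (k - l - 1) * esymmMean n l lam ≤ esymmMean n (k - 1) lam ^ (k - l) := by
  have hpos := esymmMean_pos_of_mem_GammaK hkn hlam
  have h := mul_div_pow_le_of_logConcave hpos (esymmMean_logConcave hkn) (by omega)
    (l := l) (m := k - l) (by omega)
  obtain ⟨d, hd⟩ : ∃ d, k - l = d + 1 := ⟨k - l - 1, by omega⟩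
  have hk1 := hpos (k - 1) (by omega)
  rw [Nat.add_sub_cancel' hlk.le, hd, div_pow, mul_div_assoc', div_le_iff₀ (by positivity)] at h
  rw [hd, Nat.add_sub_cancel]
  refine le_of_mul_le_mul_left ?_ (hpos k le_rfl)
  linear_combination h

lemma esymm_div_rpow_le (hlk : l < k) (hkn : k ≤ n) (hlam : lam ∈ GammaK n k) :
    (esymm n k lam / esymm n l lam) ^ (1 - 1 / ((k : ℝ) - l))
      ≤ ((n.choose k : ℝ) ^ (k - l - 1) * n.choose l / (n.choose (k - 1) : ℝ) ^ (k - l))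
          ^ (1 / ((k : ℝ) - l)) * (esymm n (k - 1) lam / esymm n l lam) := by
  have hσ (j : ℕ) (hj : j ≤ k) := esymm_pos_of_mem_GammaK hlam hj
  have hk := hσ k le_rfl
  have hk1 := hσ (k - 1) (by omega)
  have hl := hσ l hlk.le
  have hCk := cast_choose_pos hkn
  have hCk1 := cast_choose_pos (n := n) (j := k - 1) (by omega)
  have hCl := cast_choose_pos (n := n) (j := l) (by omega)
  rw [← Nat.cast_sub hlk.le]
  refine rpow_one_sub_inv_le (by positivity) (by positivity) (by positivity) (by omega) ?_
  have key := esymmMean_pow_mul_le hlk hkn hlam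
  obtain ⟨d, hd⟩ : ∃ d, k - l = d + 1 := ⟨k - l - 1, by omega⟩
  rw [hd, Nat.add_sub_cancel] at key ⊢
  simp only [esymmMean, div_pow] at key
  rw [div_mul_div_comm, div_le_div_iff₀ (by positivity) (by positivity)] at key
  rw [div_pow, div_pow, div_mul_div_comm, div_le_div_iff₀ (by positivity) (by positivity)]
  linear_combination esymm n l lam ^ d * key

end GardingCone

theorem stmt5 (n k l : ℕ) (hlk : l < k) (hkn : k ≤ n) :
    ∃ c : ℝ, 0 < c ∧
      ∀ lam ∈ GammaK n k,
        (((n : ℝ) - (k : ℝ) + 1) * (1 - (l : ℝ) / (k : ℝ)) *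
            (esymm n (k - 1) lam / esymm n l lam) ≤ ∑ j, Gjj n k l lam j) ∧
        c * (esymm n k lam / esymm n l lam) ^ (1 - 1 / ((k : ℝ) - (l : ℝ)))
          ≤ ((n : ℝ) - (k : ℝ) + 1) * (1 - (l : ℝ) / (k : ℝ)) *
              (esymm n (k - 1) lam / esymm n l lam) := by
  set K : ℝ := ((n : ℝ) - k + 1) * (1 - (l : ℝ) / k)
  set B : ℝ :=
    ((n.choose k : ℝ) ^ (k - l - 1) * n.choose l / (n.choose (k - 1) : ℝ) ^ (k - l))
      ^ (1 / ((k : ℝ) - l))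
  have hK : 0 < K := by
    have hkn' : (k : ℝ) ≤ n := by exact_mod_cast hkn
    have hlk' : (l : ℝ) / k < 1 :=
      (div_lt_one (by exact_mod_cast (by omega : 0 < k))).2 (by exact_mod_cast hlk)
    exact mul_pos (by linarith) (by linarith)
  have hB : 0 < B := by
    have := cast_choose_pos hkn
    have := cast_choose_pos (n := n) (j := l) (by omega)
    have := cast_choose_pos (n := n) (j := k - 1) (by omega)
    positivity
  refine ⟨K / B, div_pos hK hB, fun lam hlam => ⟨sum_Gjj_ge hlk hkn hlam, ?_⟩⟩
  calc K / B * (esymm n k lam / esymm n l lam) ^ (1 - 1 / ((k : ℝ) - l))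
      ≤ K / B * (B * (esymm n (k - 1) lam / esymm n l lam)) :=
        mul_le_mul_of_nonneg_left (esymm_div_rpow_le hlk hkn hlam) (div_pos hK hB).le
    _ = K * (esymm n (k - 1) lam / esymm n l lam) := by field_simp
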